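/- arXiv:1510.08202 — 3 statements merged into one kernel-verified Lean document; each statement's English description precedes it below -/
import Mathlib

section
/- The function I(C) = (1/2)·log((1+ρ)/(1+ρ·e^{-2C})) is strictly concave on (0,∞) for every fixed ρ > 0. -/
/-! The derivative `I'(C) = ρ e^{-2C} / (1 + ρ e^{-2C})` is `t / (1 + t)` evaluated at the strictly
decreasing `t = ρ e^{-2C}`, so it is strictly decreasing; hence `I` is strictly concave on all
of `ℝ`. -/

open Real Set

noncomputable def gaussianRate (ρ C : ℝ) : ℝ := 1 / 2 * log ((1 + ρ) / (1 + ρ * exp (-2 * C)))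

lemma gaussianRate_eq_sub {ρ : ℝ} (hρ : 0 ≤ ρ) (C : ℝ) :
    gaussianRate ρ C = 1 / 2 * (log (1 + ρ) - log (1 + ρ * exp (-2 * C))) := by
  rw [gaussianRate, log_div (by positivity) (by positivity)]

lemma hasDerivAt_gaussianRate {ρ : ℝ} (hρ : 0 ≤ ρ) (C : ℝ) :
    HasDerivAt (gaussianRate ρ) (ρ * exp (-2 * C) / (1 + ρ * exp (-2 * C))) C := by
  have hexp : HasDerivAt (fun x => 1 + ρ * exp (-2 * x)) (ρ * (exp (-2 * C) * -2)) C :=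
    (((hasDerivAt_id C).const_mul (-2)).exp.const_mul ρ).const_add 1 |>.congr_deriv (by simp)
  have hlog := ((hexp.log (by positivity)).const_sub (log (1 + ρ))).const_mul (1 / 2)
  rw [funext (gaussianRate_eq_sub hρ)]
  exact hlog.congr_deriv (by ring)

lemma strictAnti_deriv_gaussianRate {ρ : ℝ} (hρ : 0 < ρ) :
    StrictAnti (deriv (gaussianRate ρ)) := by
  intro a b hab
  simp only [(hasDerivAt_gaussianRate hρ.le _).deriv]
  have hlt : ρ * exp (-2 * b) < ρ * exp (-2 * a) :=
    mul_lt_mul_of_pos_left (exp_lt_exp.2 (by linarith)) hρ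
  rw [div_lt_div_iff₀ (by positivity) (by positivity)]
  linarith

lemma strictConcaveOn_gaussianRate {ρ : ℝ} (hρ : 0 < ρ) :
    StrictConcaveOn ℝ univ (gaussianRate ρ) :=
  (strictAnti_deriv_gaussianRate hρ).strictConcaveOn_univ_of_deriv
    (continuous_iff_continuousAt.2 fun C => (hasDerivAt_gaussianRate hρ.le C).continuousAt)

theorem gib_rate_strictConcave (ρ : ℝ) (hρ : 0 < ρ) :
    StrictConcaveOn ℝ (Set.Ioi 0)
      (fun C : ℝ => (1/2) * Real.log ((1 + ρ) / (1 + ρ * Real.exp (-2 * C)))) :=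
  (strictConcaveOn_gaussianRate hρ).subset (subset_univ _) (convex_Ioi 0)
end

section
/- Along the critical curve S = √λ_c/(1 − √λ_c) with Q = (1/S)·λ_c/(1 − λ_c), one has Q = √λ_c/(1 + √λ_c), and consequently lim_{λ_c → 1⁻} C = lim_{λ_c → 1⁻} (−log Q) = log 2. -/
/-! Writing `s = √λ` turns `λ / (1 - λ)` into `s² / ((1 - s)(1 + s))`, and dividing by
`S = s / (1 - s)` cancels the factor `1 - s`, leaving `Q = s / (1 + s)`. As `λ → 1` this tends
to `1 / 2`, so `C = -log Q → log 2` by continuity. -/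

lemma one_div_div_one_sub_mul_sq_div_one_sub_sq {K : Type*} [Field K] {s : K} (hs : s ≠ 1) :
    1 / (s / (1 - s)) * (s ^ 2 / (1 - s ^ 2)) = s / (1 + s) := by
  have h1 : 1 - s ≠ 0 := sub_ne_zero.mpr hs.symm
  -- At `s = 0` and `s = -1` both sides are `0` (with `x / 0 = 0`).
  rcases eq_or_ne s 0 with rfl | h0
  · simp
  rcases eq_or_ne (1 + s) 0 with h2 | h2
  · have hs' : s = -1 := by linear_combination h2
    subst hs'
    norm_num
  have h3 : 1 - s ^ 2 = (1 - s) * (1 + s) := by ring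
  rw [h3]
  field_simp

lemma Real.continuous_sqrt_div_one_add_sqrt : Continuous (fun y : ℝ => √y / (1 + √y)) :=
  Real.continuous_sqrt.div (continuous_const.add Real.continuous_sqrt) fun _ => by positivity

theorem critical_curve_limit :
    (∀ lc : ℝ, lc ∈ Set.Ioo (0:ℝ) 1 →
      ∀ S Q : ℝ, S = Real.sqrt lc / (1 - Real.sqrt lc) →
        Q = (1 / S) * (lc / (1 - lc)) →
        Q = Real.sqrt lc / (1 + Real.sqrt lc)) ∧
    Filter.Tendsto
      (fun lc : ℝ => -Real.log (Real.sqrt lc / (1 + Real.sqrt lc)))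
      (nhdsWithin 1 (Set.Iio 1)) (nhds (Real.log 2)) := by
  constructor
  · rintro lc ⟨h0, h1⟩ S Q rfl rfl
    have hsqrt : √lc ≠ 1 := by
      rw [Ne, Real.sqrt_eq_one]
      exact h1.ne
    simpa only [Real.sq_sqrt h0.le] using one_div_div_one_sub_mul_sq_div_one_sub_sq hsqrt
  · have hQ : ContinuousAt (fun lc : ℝ => -Real.log (√lc / (1 + √lc))) 1 :=
      ((Real.continuousAt_log (by norm_num)).comp
        Real.continuous_sqrt_div_one_add_sqrt.continuousAt).neg
    have hlim : -Real.log (√1 / (1 + √1)) = Real.log 2 := by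
      rw [Real.sqrt_one, one_add_one_eq_two, one_div, Real.log_inv, neg_neg]
    exact hlim ▸ hQ.tendsto.mono_left nhdsWithin_le_nhds
end

section
/- Fix total power P > 0 and total rate C > 0, and for bandwidth B > 0 define f(B) = B·log((1 + P/B)/(1 + (P/B)·e^{-C/B})), the mutual information rate when power and rate are spread uniformly over bandwidth B on a flat channel. Then f is not monotone increasing in B in general; specifically, for P = 2 and C = 1/2, there exists B₀ > 0 and B₁ > B₀ with f(B₀) > f(B₁). -/
/-!
Spreading over bandwidth `B` gives the rate `f(B) = B · log r`, where `r > 1` because `e^{-C/B} < 1`,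
so `f(B) > 0`. On the other hand `log r ≤ r - 1 ≤ (P/B)(1 - e^{-C/B}) ≤ P C / B²`, so `f(B) ≤ P C / B`
tends to `0`. Hence any `f(B₀)` is beaten from below at a large enough bandwidth `B₁`.
-/

open Real

noncomputable def spreadRate (P C B : ℝ) : ℝ :=
  B * log ((1 + P / B) / (1 + P / B * exp (-C / B)))

lemma log_spreadRatio_pos {a x : ℝ} (ha : 0 < a) (hx : 0 < x) :
    0 < log ((1 + a) / (1 + a * exp (-x))) := by
  have he : exp (-x) < 1 := exp_lt_one_iff.mpr (neg_lt_zero.mpr hx)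
  have hden : 0 < 1 + a * exp (-x) := by positivity
  apply log_pos
  rw [one_lt_div hden]
  nlinarith

lemma log_spreadRatio_le {a x : ℝ} (ha : 0 ≤ a) (hx : 0 ≤ x) :
    log ((1 + a) / (1 + a * exp (-x))) ≤ a * x := by
  have he : 1 - x ≤ exp (-x) := by linarith [add_one_le_exp (-x)]
  have hden : 1 ≤ 1 + a * exp (-x) := by nlinarith [exp_pos (-x)]
  calc log ((1 + a) / (1 + a * exp (-x)))
      ≤ (1 + a) / (1 + a * exp (-x)) - 1 := log_le_sub_one_of_pos (by positivity)
    _ = a * (1 - exp (-x)) / (1 + a * exp (-x)) := by field_simp; ring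
    _ ≤ a * (1 - exp (-x)) := div_le_self (by nlinarith [exp_le_one_iff.mpr (neg_nonpos.mpr hx)]) hden
    _ ≤ a * x := by nlinarith

lemma spreadRate_pos {P C B : ℝ} (hP : 0 < P) (hC : 0 < C) (hB : 0 < B) :
    0 < spreadRate P C B := by
  unfold spreadRate
  rw [neg_div]
  exact mul_pos hB (log_spreadRatio_pos (div_pos hP hB) (div_pos hC hB))

lemma spreadRate_le {P C B : ℝ} (hP : 0 ≤ P) (hC : 0 ≤ C) (hB : 0 < B) :
    spreadRate P C B ≤ P * C / B := by
  unfold spreadRate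
  rw [neg_div]
  calc B * log ((1 + P / B) / (1 + P / B * exp (-(C / B))))
      ≤ B * (P / B * (C / B)) :=
        mul_le_mul_of_nonneg_left (log_spreadRatio_le (by positivity) (by positivity)) hB.le
    _ = P * C / B := by field_simp

theorem exists_spreadRate_lt {P C B₀ : ℝ} (hP : 0 < P) (hC : 0 < C) (hB₀ : 0 < B₀) :
    ∃ B₁, B₀ < B₁ ∧ spreadRate P C B₁ < spreadRate P C B₀ := by
  set f₀ := spreadRate P C B₀
  have hf₀ : 0 < f₀ := spreadRate_pos hP hC hB₀
  have hPC : 0 < P * C := mul_pos hP hC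
  refine ⟨B₀ + P * C / f₀, by linarith [div_pos hPC hf₀], ?_⟩
  have hB₁ : 0 < B₀ + P * C / f₀ := by positivity
  calc spreadRate P C (B₀ + P * C / f₀) ≤ P * C / (B₀ + P * C / f₀) :=
        spreadRate_le hP.le hC.le hB₁
    _ < f₀ := by
        rw [div_lt_iff₀ hB₁, mul_add, mul_div_cancel₀ _ hf₀.ne']
        nlinarith

theorem uniform_spreading_not_monotone :
    ∃ B₀ B₁ : ℝ, 0 < B₀ ∧ B₀ < B₁ ∧
      B₀ * Real.log ((1 + 2 / B₀) / (1 + (2 / B₀) * Real.exp (-(1/2) / B₀))) >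
      B₁ * Real.log ((1 + 2 / B₁) / (1 + (2 / B₁) * Real.exp (-(1/2) / B₁))) := by
  obtain ⟨B₁, hlt, hrate⟩ := exists_spreadRate_lt (P := 2) (C := 1/2) two_pos one_half_pos one_pos
  exact ⟨1, B₁, one_pos, hlt, hrate⟩
end
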